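/- arXiv:1905.11495 — 4 statements merged into one kernel-verified Lean document; each statement's English description precedes it below -/
import Mathlib

section
/- In A_inf = W(O_C^♭) with ε, μ = [ε]−1, ξ = μ/φ^{−1}(μ), ξ̃ = φ(μ)/μ as above, the pairs (p, ξ), (p, ξ̃), (p, μ) and (ξ̃, μ) are all regular sequences on A_inf. -/
/-!
Since `O` is a perfect domain of characteristic `p`, `W(O)` is a `p`-torsion free domain and
`W(O)/p ≅ O` through the constant coefficient; hence `(p, b)` is regular as soon as the constant
coefficient of `b` is nonzero. The constant coefficients of `μ`, `ξ`, `ξ̃` are `ε - 1` and the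
geometric sums `∑_{k<p} δ^k = (δ - 1)^{p-1}` for `δ = ε^{1/p}, ε`, all nonzero as `ε ≠ 1`.
For `(ξ̃, μ)`, note `ξ̃ ≡ p mod μ`, and a regular pair of non-zerodivisors may be swapped:
`(p, μ)` gives `(μ, p) = (μ, ξ̃)`, hence `(ξ̃, μ)`.
-/

/-- `(a, b)` is a regular sequence on `A`: `a` is a non-zerodivisor on `A`
and `b` is a non-zerodivisor on `A/a`. -/
def RegPair (A : Type) [CommRing A] (a b : A) : Prop :=
  (∀ x : A, a * x = 0 → x = 0) ∧
    (∀ x : A ⧸ Ideal.span {a},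
      (Ideal.Quotient.mk (Ideal.span {a}) b) * x = 0 → x = 0)

namespace RegPair

variable {A : Type} [CommRing A] {a b : A}

theorem swap (h : RegPair A a b) (hb : ∀ x : A, b * x = 0 → x = 0) : RegPair A b a := by
  refine ⟨hb, fun x hx => ?_⟩
  obtain ⟨z, rfl⟩ := Ideal.Quotient.mk_surjective x
  rw [← map_mul, Ideal.Quotient.eq_zero_iff_mem, Ideal.mem_span_singleton] at hx
  obtain ⟨y, hy⟩ := hx
  -- `b y = a z ∈ (a)` forces `y = a w`, and cancelling `a` in `a z = b a w` gives `z = b w`.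
  have hby : Ideal.Quotient.mk (Ideal.span {a}) b * Ideal.Quotient.mk _ y = 0 := by
    rw [← map_mul, ← hy, Ideal.Quotient.eq_zero_iff_mem]
    exact Ideal.mem_span_singleton.2 (dvd_mul_right a z)
  obtain ⟨w, rfl⟩ := Ideal.mem_span_singleton.1 (Ideal.Quotient.eq_zero_iff_mem.1 (h.2 _ hby))
  have hz : z = b * w := sub_eq_zero.1 <| h.1 _ <| by linear_combination hy
  rw [Ideal.Quotient.eq_zero_iff_mem, Ideal.mem_span_singleton]
  exact ⟨w, hz⟩

theorem of_sub_mem_span {b' : A} (h : RegPair A a b) (hb' : b' - b ∈ Ideal.span {a}) :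
    RegPair A a b' := by
  refine ⟨h.1, ?_⟩
  rw [(Ideal.Quotient.mk_eq_mk_iff_sub_mem b' b).2 hb']
  exact h.2

end RegPair

theorem sub_one_dvd_geom_sum_sub_natCast {R : Type*} [CommRing R] (x : R) (n : ℕ) :
    x - 1 ∣ ∑ k ∈ Finset.range n, x ^ k - n := by
  have : ∑ k ∈ Finset.range n, x ^ k - n = ∑ k ∈ Finset.range n, (x ^ k - 1 ^ k) := by
    simp [Finset.sum_sub_distrib]
  rw [this]
  exact Finset.dvd_sum fun k _ => sub_dvd_pow_sub_pow x 1 k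

theorem geom_sum_range_ne_zero_of_charP {R : Type*} [CommRing R] [NoZeroDivisors R] (p : ℕ)
    [Fact p.Prime] [CharP R p] {x : R} (hx : x ≠ 1) : ∑ k ∈ Finset.range p, x ^ k ≠ 0 := by
  intro h
  have : (x - 1) ^ p = 0 := by
    rw [sub_pow_char, one_pow, ← geom_sum_mul, h, zero_mul]
  exact hx (sub_eq_zero.1 (pow_eq_zero_iff (Fact.out : p.Prime).ne_zero |>.1 this))

namespace WittVector

variable {p : ℕ} [Fact p.Prime] {O : Type}

theorem constantCoeff_teichmuller [CommRing O] (δ : O) : constantCoeff (teichmuller p δ) = δ :=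
  teichmuller_coeff_zero p δ

theorem constantCoeff_geom_sum_teichmuller [CommRing O] (δ : O) (n : ℕ) :
    constantCoeff (∑ k ∈ Finset.range n, teichmuller p δ ^ k) = ∑ k ∈ Finset.range n, δ ^ k := by
  simp only [map_sum, map_pow, constantCoeff_teichmuller]

theorem regPair_natCast_of_constantCoeff_ne_zero [CommRing O] [NoZeroDivisors O] [CharP O p]
    [PerfectRing O p] {b : WittVector p O} (hb : constantCoeff b ≠ 0) :
    RegPair (WittVector p O) p b := by
  refine ⟨fun x hx => eq_zero_of_p_mul_eq_zero x (by rwa [mul_comm]), fun x hx => ?_⟩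
  have : NoZeroDivisors (WittVector p O ⧸ Ideal.span {(p : WittVector p O)}) :=
    quotientPEquiv.injective.noZeroDivisors _ (map_zero _) (map_mul _)
  have hb' : Ideal.Quotient.mk _ b ≠ 0 := fun h =>
    hb ((congrArg quotientPEquiv h).trans (map_zero _))
  exact (mul_eq_zero.1 hx).resolve_left hb'

theorem eq_zero_of_mul_eq_zero_of_constantCoeff_ne_zero [CommRing O] [NoZeroDivisors O] [CharP O p]
    {b x : WittVector p O} (hb : constantCoeff b ≠ 0) (h : b * x = 0) : x = 0 :=
  (mul_eq_zero.1 h).resolve_left (ne_of_apply_ne constantCoeff (by rwa [map_zero]))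

end WittVector

/-- In `A_inf = W(O_C^♭)` (with `O_C^♭` abstracted as a
perfect domain `O` of characteristic `p`, e.g. the tilt of `O_C`), with
`ε` the fixed nontrivial compatible system of primitive `p`-power roots of
unity, `μ = [ε] - 1`, `ξ = μ / φ⁻¹(μ) = 1 + [ε^{1/p}] + ⋯ + [ε^{1/p}]^{p-1}`
and `ξ̃ = φ(μ)/μ = 1 + [ε] + ⋯ + [ε]^{p-1}`, the pairs
`(p, ξ)`, `(p, ξ̃)`, `(p, μ)` and `(ξ̃, μ)` are all regular sequences. -/
theorem ainf_regular_sequences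
    (p : ℕ) [Fact p.Prime]
    (O : Type) [CommRing O] [IsDomain O] [CharP O p] [PerfectRing O p]
    (ε : O) (hε : ε ≠ 1) :
    let A := WittVector p O
    let μ : A := WittVector.teichmuller p ε - 1
    let ξ : A := ∑ k ∈ Finset.range p,
      (WittVector.teichmuller p ((frobeniusEquiv O p).symm ε)) ^ k
    let ξt : A := ∑ k ∈ Finset.range p, (WittVector.teichmuller p ε) ^ k
    RegPair A (p : A) ξ ∧ RegPair A (p : A) ξt ∧
      RegPair A (p : A) μ ∧ RegPair A ξt μ := by
  intro A μ ξ ξt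
  have hμ : WittVector.constantCoeff μ ≠ 0 := by
    rw [map_sub, map_one, WittVector.constantCoeff_teichmuller]
    exact sub_ne_zero.2 hε
  have hξ : WittVector.constantCoeff ξ ≠ 0 := by
    rw [WittVector.constantCoeff_geom_sum_teichmuller]
    exact geom_sum_range_ne_zero_of_charP p ((RingEquiv.map_ne_one_iff _).2 hε)
  have hξt : WittVector.constantCoeff ξt ≠ 0 := by
    rw [WittVector.constantCoeff_geom_sum_teichmuller]
    exact geom_sum_range_ne_zero_of_charP p hε
  have hpμ := WittVector.regPair_natCast_of_constantCoeff_ne_zero hμ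
  have hξt_sub : ξt - p ∈ Ideal.span {μ} :=
    Ideal.mem_span_singleton.2 (sub_one_dvd_geom_sum_sub_natCast _ p)
  refine ⟨WittVector.regPair_natCast_of_constantCoeff_ne_zero hξ,
    WittVector.regPair_natCast_of_constantCoeff_ne_zero hξt, hpμ, ?_⟩
  have hμp : RegPair A μ p :=
    hpμ.swap fun _ => WittVector.eq_zero_of_mul_eq_zero_of_constantCoeff_ne_zero hμ
  exact (hμp.of_sub_mem_span hξt_sub).swap
    fun _ => WittVector.eq_zero_of_mul_eq_zero_of_constantCoeff_ne_zero hξt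
end

section
/- Let M be a module over A_inf equipped with an additive operator φ^{−1} that is φ^{−1}-semilinear (φ^{−1}(a·x) = φ^{−1}(a)·φ^{−1}(x)), and set ψ_l = ξ^l φ^{−1} for l ≥ 0, where ξ, μ ∈ A_inf are as in Fontaine's theory. Suppose ψ_l is injective on M[μ^j] (the μ^j-torsion of M) for all l > 0 and ψ_l is surjective on M[μ^j] for all l ≥ 0. Then for all l ≥ 0, the induced operator ψ_l on the quotient M[μ^j]/M[μ] is injective, hence bijective. (Injectivity: if μ·ψ_l(x) = 0 then ψ_{l+1}(μx) = 0, and injectivity of ψ_{l+1} on M[μ^{j−1}] forces μx = 0, i.e., x ∈ M[μ].) -/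
open Submodule

section

variable {A M : Type*} [CommRing A] [AddCommGroup M] [Module A M]

theorem smul_pow_smul_semilinear_eq {σ : A →+* A} {μ ξ : A} (hξμ : ξ * σ μ = μ)
    {F : M → M} (hF : ∀ (a : A) (x : M), F (a • x) = σ a • F x) (l : ℕ) (z : M) :
    μ • ξ ^ l • F z = ξ ^ (l + 1) • F (μ • z) := by
  rw [hF, smul_smul, smul_smul, pow_succ, mul_assoc, hξμ, mul_comm]

theorem sub_mem_torsionBy_of_smul_comp_eq {μ : A} {f g : M → M} {N : Submodule A M}
    (hfg : ∀ z, μ • f z = g (μ • z)) (hg : Set.InjOn g N) {x y : M} (hx : x ∈ N) (hy : y ∈ N)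
    (h : f x - f y ∈ torsionBy A M μ) : x - y ∈ torsionBy A M μ := by
  rw [mem_torsionBy_iff] at h ⊢
  have hgxy : g (μ • x) = g (μ • y) := by
    rw [← hfg, ← hfg, ← sub_eq_zero, ← smul_sub, h]
  rw [smul_sub, hg (N.smul_mem μ hx) (N.smul_mem μ hy) hgxy, sub_self]

end

theorem psi_bijective_on_torsion_quotient_general
    (A : Type) [CommRing A] (σ : A →+* A) (μ ξ : A) (hξμ : ξ * σ μ = μ)
    (M : Type) [AddCommGroup M] [Module A M]
    (F : M →+ M) (hF : ∀ (a : A) (x : M), F (a • x) = σ a • F x)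
    (ψ : ℕ → M → M) (hψ : ∀ l x, ψ l x = ξ ^ l • F x)
    (j : ℕ)
    (hinj : ∀ l > 0, ∀ x ∈ Submodule.torsionBy A M (μ ^ j),
      ∀ y ∈ Submodule.torsionBy A M (μ ^ j), ψ l x = ψ l y → x = y)
    (hsurj : ∀ l : ℕ, ∀ y ∈ Submodule.torsionBy A M (μ ^ j),
      ∃ x ∈ Submodule.torsionBy A M (μ ^ j), ψ l x = y) :
    ∀ l : ℕ,
      -- the induced map on `M[μ^j]/M[μ]` is injective …
      (∀ x ∈ Submodule.torsionBy A M (μ ^ j),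
        ∀ y ∈ Submodule.torsionBy A M (μ ^ j),
          ψ l x - ψ l y ∈ Submodule.torsionBy A M μ →
            x - y ∈ Submodule.torsionBy A M μ) ∧
      -- … and surjective, hence bijective
      (∀ y ∈ Submodule.torsionBy A M (μ ^ j),
        ∃ x ∈ Submodule.torsionBy A M (μ ^ j),
          ψ l x - y ∈ Submodule.torsionBy A M μ) := by
  intro l
  have hψμ : ∀ z, μ • ψ l z = ψ (l + 1) (μ • z) := fun z => by
    rw [hψ, hψ, smul_pow_smul_semilinear_eq hξμ hF]
  refine ⟨fun x hx y hy => sub_mem_torsionBy_of_smul_comp_eq hψμ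
    (fun x hx y hy => hinj (l + 1) l.succ_pos x hx y hy) hx hy, fun y hy => ?_⟩
  obtain ⟨x, hx, rfl⟩ := hsurj l y hy
  exact ⟨x, hx, by rw [sub_self]; exact zero_mem _⟩

/-- Let `M` be a module over `A_inf` (abstracted as a
commutative ring `A`) equipped with an additive `σ`-semilinear operator
`F` (playing `φ⁻¹`, so `σ = φ⁻¹` on scalars), and let `μ, ξ ∈ A` satisfy
`ξ · σ(μ) = μ` (i.e. `ξ = μ/φ⁻¹(μ)`). Set `ψ_l = ξ^l F`. Fix `j ≥ 1`.
If `ψ_l` is injective on the torsion submodule `M[μ^j]` for all `l > 0`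
and surjective on `M[μ^j]` for all `l ≥ 0`, then for every `l ≥ 0` the
induced operator `ψ_l` on `M[μ^j]/M[μ]` is injective, hence bijective. -/
theorem psi_bijective_on_torsion_quotient
    (A : Type) [CommRing A] (σ : A →+* A) (μ ξ : A) (hξμ : ξ * σ μ = μ)
    (M : Type) [AddCommGroup M] [Module A M]
    (F : M →+ M) (hF : ∀ (a : A) (x : M), F (a • x) = σ a • F x)
    (ψ : ℕ → M → M) (hψ : ∀ l x, ψ l x = ξ ^ l • F x)
    (j : ℕ) (hj : 1 ≤ j)
    (hinj : ∀ l > 0, ∀ x ∈ Submodule.torsionBy A M (μ ^ j),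
      ∀ y ∈ Submodule.torsionBy A M (μ ^ j), ψ l x = ψ l y → x = y)
    (hsurj : ∀ l : ℕ, ∀ y ∈ Submodule.torsionBy A M (μ ^ j),
      ∃ x ∈ Submodule.torsionBy A M (μ ^ j), ψ l x = y) :
    ∀ l : ℕ,
      -- the induced map on `M[μ^j]/M[μ]` is injective …
      (∀ x ∈ Submodule.torsionBy A M (μ ^ j),
        ∀ y ∈ Submodule.torsionBy A M (μ ^ j),
          ψ l x - ψ l y ∈ Submodule.torsionBy A M μ →
            x - y ∈ Submodule.torsionBy A M μ) ∧
      -- … and surjective, hence bijective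
      (∀ y ∈ Submodule.torsionBy A M (μ ^ j),
        ∃ x ∈ Submodule.torsionBy A M (μ ^ j),
          ψ l x - y ∈ Submodule.torsionBy A M μ) :=
  psi_bijective_on_torsion_quotient_general A σ μ ξ hξμ M F hF ψ hψ j hinj hsurj
end

section
/- In the Milnor K-theory of the ring of global invertible functions on Drinfeld symmetric space (or more abstractly: in any Milnor K-group of a commutative ring R with the Steinberg relation {z, 1−z} = 0 for z, 1−z ∈ R^*, and with {x, a} = 0 for a in the image of a fixed subfield of constants K), the following holds: if x_1, ..., x_i ∈ R^* are quotients of K-linear forms and a_1, ..., a_i ∈ K are such that y := 1 + a_1 x_1 + ⋯ + a_i x_i ∈ R^*, with all intermediate elements invertible as required by the inductive argument, then the symbol {x_1, ..., x_i, 1 + a_1 x_1 + ⋯ + a_i x_i} = 0 in K^M_{i+1}(R^*). In particular, for the base case i = 1: if x, 1 + a x ∈ R^* with a ∈ K, then {x, 1 + ax} = 0, since {x, 1+ax} = {ax, 1+ax} − {a, 1+ax} = −{a, 1+ax} = 0 using the Steinberg relation and triviality of symbols with constant entries. -/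
/-!
Write `u_k = 1 + a₁x₁ + ⋯ + a_kx_k` and show, by induction on `k`, that every symbol whose
first entries are `x₁, …, x_k, u_k` vanishes. For `k = 0` the entry `u_0 = 1` is a constant.
For the step, `u_{k+1} = u_k t` with `t = 1 - z` and `z = -a_{k+1}x_{k+1}/u_k`, so
`{x_{k+1}, u_{k+1}} = -{u_k, x_{k+1}} + {x_{k+1}, t}`; the first term vanishes by induction, and
`z u_k = -a_{k+1} x_{k+1}` turns `{x_{k+1}, t}` into `{z, 1 - z} + {u_k, t} - {-a_{k+1}, t} = 0`.
-/

open Function Finset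

theorem Fin.sum_filter_val_lt_add_one {M : Type*} [AddCommMonoid M] {n : ℕ} (f : Fin n → M)
    (j : Fin n) :
    ∑ k ∈ univ.filter (fun k : Fin n => (k : ℕ) < j + 1), f k =
      f j + ∑ k ∈ univ.filter (fun k : Fin n => (k : ℕ) < j), f k := by
  have hinsert : univ.filter (fun k : Fin n => (k : ℕ) < j + 1) =
      insert j (univ.filter (fun k : Fin n => (k : ℕ) < j)) := by
    ext k
    simp only [mem_filter, mem_insert, mem_univ, true_and, Fin.ext_iff]
    omega
  rw [hinsert, sum_insert (by simp)]

section Symbol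

variable {K R KM : Type*} [Field K] [CommRing R] [Algebra K R] [AddCommGroup KM] {n : ℕ}
  {s : (Fin (n + 1) → Rˣ) → KM}

theorem symbol_update_update_swap
    (hswap : ∀ (v : Fin (n + 1) → Rˣ) (j : Fin n),
      s (v ∘ Equiv.swap j.castSucc j.succ) = - s v)
    (v : Fin (n + 1) → Rˣ) (j : Fin n) (b c : Rˣ) :
    s (update (update v j.castSucc b) j.succ c) =
      - s (update (update v j.castSucc c) j.succ b) := by
  have hne : j.castSucc ≠ j.succ := Fin.castSucc_lt_succ.ne
  rw [← hswap _ j]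
  congr 1
  ext k
  rcases eq_or_ne k j.castSucc with rfl | hp
  · simp [hne]
  rcases eq_or_ne k j.succ with rfl | hq
  · simp [hne]
  · simp [Equiv.swap_apply_of_ne_of_ne hp hq, update_of_ne hp, update_of_ne hq]

theorem symbol_update_update_eq_zero_of_mul_eq_add_mul
    (hmul : ∀ (v : Fin (n + 1) → Rˣ) (j : Fin (n + 1)) (w₁ w₂ : Rˣ),
      s (update v j (w₁ * w₂)) = s (update v j w₁) + s (update v j w₂))
    (hconst : ∀ (v : Fin (n + 1) → Rˣ) (j : Fin (n + 1)),
      (∃ c : Kˣ, (v j : R) = algebraMap K R c) → s v = 0)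
    (hst : ∀ (v : Fin (n + 1) → Rˣ) (j : Fin n),
      (v j.castSucc : R) + (v j.succ : R) = 1 → s v = 0)
    (v : Fin (n + 1) → Rˣ) (j : Fin n) {x w t : Rˣ} (a : K)
    (ht : (w : R) * t = w + algebraMap K R a * x)
    (hw : s (update (update v j.castSucc w) j.succ t) = 0) :
    s (update (update v j.castSucc x) j.succ t) = 0 := by
  have hne : j.castSucc ≠ j.succ := Fin.castSucc_lt_succ.ne
  set V : Rˣ → Fin (n + 1) → Rˣ := fun b => update (update v j.castSucc b) j.succ t
  have hmul_fst (b b' : Rˣ) : s (V (b * b')) = s (V b) + s (V b') := by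
    simp only [V, update_comm hne]
    exact hmul _ _ b b'
  rcases eq_or_ne a 0 with rfl | ha
  · have ht_one : (t : R) = 1 :=
      w.isUnit.mul_left_cancel (by simpa using ht)
    exact hconst _ j.succ ⟨1, by simp [ht_one]⟩
  set cK : Kˣ := Units.mk0 (-a) (neg_ne_zero.mpr ha)
  set c : Rˣ := Units.map (algebraMap K R).toMonoidHom cK
  set z : Rˣ := c * x * w⁻¹
  have hsteinberg : s (V z) = 0 := by
    refine hst _ j ?_
    have hwinv : (w : R) * (w⁻¹ : Rˣ) = 1 := w.mul_inv
    simp only [V, update_self, update_of_ne hne, z, c, Units.val_mul, Units.coe_map,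
      MonoidHom.coe_coe, RingHom.toMonoidHom_eq_coe, cK, Units.val_mk0, map_neg]
    linear_combination (↑w⁻¹ : R) * ht + (1 - (t : R)) * hwinv
  have hconst_c : s (V c) = 0 := hconst _ j.castSucc ⟨cK, by simp [V, hne, c]⟩
  have hzw : z * w = c * x := by simp only [z, inv_mul_cancel_right]
  have hsum := hmul_fst z w
  rw [hzw, hmul_fst, hconst_c, hsteinberg, hw] at hsum
  show s (V x) = 0
  simpa using hsum

theorem symbol_update_update_eq_zero_of_eq_add_mul
    (hmul : ∀ (v : Fin (n + 1) → Rˣ) (j : Fin (n + 1)) (w₁ w₂ : Rˣ),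
      s (update v j (w₁ * w₂)) = s (update v j w₁) + s (update v j w₂))
    (hconst : ∀ (v : Fin (n + 1) → Rˣ) (j : Fin (n + 1)),
      (∃ c : Kˣ, (v j : R) = algebraMap K R c) → s v = 0)
    (hst : ∀ (v : Fin (n + 1) → Rˣ) (j : Fin n),
      (v j.castSucc : R) + (v j.succ : R) = 1 → s v = 0)
    (hswap : ∀ (v : Fin (n + 1) → Rˣ) (j : Fin n),
      s (v ∘ Equiv.swap j.castSucc j.succ) = - s v)
    (v : Fin (n + 1) → Rˣ) (j : Fin n) {x w y : Rˣ} (a : K)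
    (hy : (y : R) = w + algebraMap K R a * x)
    (hw : ∀ t : Rˣ, s (update (update v j.castSucc w) j.succ t) = 0) :
    s (update (update v j.castSucc x) j.succ y) = 0 := by
  have hy_eq : y = w * (w⁻¹ * y) := (mul_inv_cancel_left w y).symm
  have hxw : s (update (update v j.castSucc x) j.succ w) = 0 := by
    rw [symbol_update_update_swap hswap, hw, neg_zero]
  have hxt : s (update (update v j.castSucc x) j.succ (w⁻¹ * y)) = 0 :=
    symbol_update_update_eq_zero_of_mul_eq_add_mul hmul hconst hst v j a
      (by rw [← hy, ← Units.val_mul, ← hy_eq]) (hw _)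
  rw [hy_eq, hmul, hxw, hxt, add_zero]

theorem symbol_snoc_eq_zero_of_partial_sums
    (hmul : ∀ (v : Fin (n + 1) → Rˣ) (j : Fin (n + 1)) (w₁ w₂ : Rˣ),
      s (update v j (w₁ * w₂)) = s (update v j w₁) + s (update v j w₂))
    (hconst : ∀ (v : Fin (n + 1) → Rˣ) (j : Fin (n + 1)),
      (∃ c : Kˣ, (v j : R) = algebraMap K R c) → s v = 0)
    (hst : ∀ (v : Fin (n + 1) → Rˣ) (j : Fin n),
      (v j.castSucc : R) + (v j.succ : R) = 1 → s v = 0)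
    (hswap : ∀ (v : Fin (n + 1) → Rˣ) (j : Fin n),
      s (v ∘ Equiv.swap j.castSucc j.succ) = - s v)
    (x : Fin n → Rˣ) (a : Fin n → K) (u : Fin (n + 1) → Rˣ) (hu_zero : (u 0 : R) = 1)
    (hu_succ : ∀ j : Fin n, (u j.succ : R) = u j.castSucc + algebraMap K R (a j) * x j) :
    s (Fin.snoc x (u (Fin.last n))) = 0 := by
  have key : ∀ k : Fin (n + 1), ∀ v : Fin (n + 1) → Rˣ,
      (∀ j : Fin n, j.castSucc < k → v j.castSucc = x j) → v k = u k → s v = 0 := by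
    intro k
    induction k using Fin.induction with
    | zero => exact fun v _ hv => hconst v 0 ⟨1, by simp [hv, hu_zero]⟩
    | succ j ih =>
      intro v hx hv
      have hv_eq : v = update (update v j.castSucc (x j)) j.succ (u j.succ) := by
        rw [← hv, ← hx j (Fin.castSucc_lt_succ), update_eq_self, update_eq_self]
      rw [hv_eq]
      refine symbol_update_update_eq_zero_of_eq_add_mul hmul hconst hst hswap v j (a j) (hu_succ j)
        fun t => ih _ (fun i hi => ?_) ?_
      · rw [update_of_ne (hi.trans Fin.castSucc_lt_succ).ne, update_of_ne hi.ne]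
        exact hx i (hi.trans Fin.castSucc_lt_succ)
      · rw [update_of_ne Fin.castSucc_lt_succ.ne, update_self]
  exact key (Fin.last n) _ (fun j _ => Fin.snoc_castSucc ..) (Fin.snoc_last ..)

end Symbol

/-- Milnor K-theory symbols, abstractly: let `R` be a
commutative algebra over a field `K`, and let `s` be a "symbol map" of
length `i + 1` with values in an abelian group `KM` (playing
`K^M_{i+1}(R^*)`): it is multiplicative in each slot, it vanishes on
symbols with a constant entry (`{…, a, …} = 0` for `a ∈ K^*`), it
satisfies the Steinberg relation (`{…, z, 1-z, …} = 0` for adjacent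
entries with `z, 1-z ∈ R^*`), and it changes sign under adjacent
transpositions.  If `x₁, …, x_i ∈ R^*`, `a₁, …, a_i ∈ K`, and all the
partial sums `1 + a₁x₁ + ⋯ + a_kx_k` (for `k = 0, …, i`) are invertible
(in particular `y = 1 + a₁x₁ + ⋯ + a_ix_i ∈ R^*`), then
`{x₁, …, x_i, 1 + a₁x₁ + ⋯ + a_ix_i} = 0`. -/
theorem milnor_symbol_steinberg
    (K : Type) [Field K] (R : Type) [CommRing R] [Algebra K R]
    (i : ℕ)
    (KM : Type) [AddCommGroup KM]
    (s : (Fin (i + 1) → Rˣ) → KM)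
    -- multiplicativity in each slot
    (hmul : ∀ (v : Fin (i + 1) → Rˣ) (j : Fin (i + 1)) (w₁ w₂ : Rˣ),
      s (Function.update v j (w₁ * w₂)) =
        s (Function.update v j w₁) + s (Function.update v j w₂))
    -- symbols with a constant entry vanish
    (hconst : ∀ (v : Fin (i + 1) → Rˣ) (j : Fin (i + 1)),
      (∃ c : Kˣ, (v j : R) = algebraMap K R c) → s v = 0)
    -- Steinberg relation for an adjacent pair (z, 1 - z)
    (hst : ∀ (v : Fin (i + 1) → Rˣ) (j : Fin i),
      (v j.castSucc : R) + (v j.succ : R) = 1 → s v = 0)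
    -- antisymmetry under adjacent transpositions
    (hswap : ∀ (v : Fin (i + 1) → Rˣ) (j : Fin i),
      s (v ∘ Equiv.swap j.castSucc j.succ) = - s v)
    -- the data: x's, coefficients, and invertible partial sums
    (x : Fin i → Rˣ) (a : Fin i → K)
    (u : Fin (i + 1) → Rˣ)
    (hu : ∀ k : Fin (i + 1),
      (u k : R) = 1 + ∑ j ∈ Finset.univ.filter (fun j : Fin i => (j : ℕ) < (k : ℕ)),
        algebraMap K R (a j) * (x j : R)) :
    s (Fin.snoc x (u (Fin.last i))) = 0 := by
  refine symbol_snoc_eq_zero_of_partial_sums hmul hconst hst hswap x a u (by simp [hu])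
    fun j => ?_
  rw [hu, hu, Fin.val_succ, Fin.val_castSucc, Fin.sum_filter_val_lt_add_one]
  ring
end

section
/- Let M be an A_inf-module with a ξ^•φ^{−1}-structure as follows: ψ_l = ξ^l φ^{−1} are additive operators on M satisfying μ·ψ_l(x) = ψ_{l+1}(μ·x). Suppose given, for every j ≥ 1, a short exact sequence 0 → M_i/μ^j → H^i(T/μ^j) → M_{i+1}[μ^j] → 0 compatible with ψ-operators, where ψ acts invertibly on the middle term H^i(T/μ^j). Then: if ψ_l is injective on M_{i+1}[μ^j] for all l > 0 (with M_0[μ^j] = 0), one deduces by the snake lemma that ψ_{l+j} is bijective on M_i/μ^j for l > 0 and injective for l = 0, and ψ_l is bijective on M_{i+1}[μ^j] for l > 0 and surjective for l = 0. -/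
/-!
Since the middle vertical map `b` is bijective, commutativity of the squares alone makes the left
map `a (l + j)` injective, since `f ∘ a (l + j) = b (l + j) ∘ f` is, and the right map `c l`
surjective, since `c l ∘ g = g ∘ b (l + j)` is. By the snake lemma the cokernel of the left map is
the kernel of the right one, so `a (l + j)` is also surjective once `c l` is injective.
-/

open Function

namespace AddMonoidHom

variable {X Y Z X' Y' Z' : Type*} [AddZeroClass X] [AddZeroClass Y] [AddZeroClass Z]
  [AddZeroClass X'] [AddZeroClass Y'] [AddZeroClass Z']

theorem injective_of_comp_eq_comp_of_injective {f : X →+ Y} {f' : X' →+ Y'} {α : X →+ X'}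
    {β : Y →+ Y'} (hc : f'.comp α = β.comp f) (hf : Injective f) (hβ : Injective β) :
    Injective α :=
  Injective.of_comp (f := f') <| by
    rw [← coe_comp, hc, coe_comp]
    exact hβ.comp hf

theorem surjective_of_comp_eq_comp_of_surjective {g : Y →+ Z} {g' : Y' →+ Z'} {β : Y →+ Y'}
    {γ : Z →+ Z'} (hc : g'.comp β = γ.comp g) (hg' : Surjective g') (hβ : Surjective β) :
    Surjective γ :=
  Surjective.of_comp (g := g) <| by
    rw [← coe_comp, ← hc, coe_comp]
    exact hg'.comp hβ

end AddMonoidHom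

theorem bms_ten_five_diagram_chase_general
    (X Y Z : Type) [AddCommGroup X] [AddCommGroup Y] [AddCommGroup Z]
    (f : X →+ Y) (g : Y →+ Z)
    (hfinj : Function.Injective f) (hgsurj : Function.Surjective g)
    (hex : AddMonoidHom.range f = AddMonoidHom.ker g)
    (j : ℕ)
    (a : ℕ → X →+ X) (b : ℕ → Y →+ Y) (c : ℕ → Z →+ Z)
    (hcommf : ∀ l : ℕ, f.comp (a (l + j)) = (b (l + j)).comp f)
    (hcommg : ∀ l : ℕ, g.comp (b (l + j)) = (c l).comp g)
    (hb : ∀ m : ℕ, Function.Bijective (b m))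
    (hcinj : ∀ l > 0, Function.Injective (c l)) :
    (∀ l > 0, Function.Bijective (a (l + j))) ∧
      Function.Injective (a j) ∧
      (∀ l > 0, Function.Bijective (c l)) ∧
      Function.Surjective (c 0) := by
  have hexact : Exact f g := AddMonoidHom.exact_iff.mpr hex.symm
  have hc_surj (l : ℕ) : Surjective (c l) :=
    AddMonoidHom.surjective_of_comp_eq_comp_of_surjective (hcommg l) hgsurj (hb _).surjective
  refine ⟨fun l hl => ?_, ?_, fun l hl => ⟨hcinj l hl, hc_surj l⟩, hc_surj 0⟩
  · exact AddMonoidHom.bijective_of_bijective_of_injective_of_left_exact f g f g _ _ _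
      (hcommf l) (hcommg l) hexact hexact (hb _) (hcinj l hl) hfinj hfinj
  · simpa using
      AddMonoidHom.injective_of_comp_eq_comp_of_injective (hcommf 0) hfinj (hb _).injective

/-- the diagram chase in BMS Lemma 10.5. Abstract
setting: for fixed `i` and `j ≥ 1`, let `X = M_i/μ^j`,
`Y = H^i(T/μ^j)`, `Z = M_{i+1}[μ^j]` sit in a short exact sequence
`0 → X →f Y →g Z → 0` compatible with the `ψ`-operators: `ψ_{l+j}` acts
on `X` (via `a (l+j)`) and on `Y` (via `b (l+j)`), `ψ_l` acts on `Z`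
(via `c l`), and `ψ` acts bijectively on the middle term `Y`.  If `ψ_l`
is injective on `Z = M_{i+1}[μ^j]` for all `l > 0`, then `ψ_{l+j}` is
bijective on `X = M_i/μ^j` for `l > 0` and injective for `l = 0`, and
`ψ_l` is bijective on `Z = M_{i+1}[μ^j]` for `l > 0` and surjective for
`l = 0`. -/
theorem bms_ten_five_diagram_chase
    (X Y Z : Type) [AddCommGroup X] [AddCommGroup Y] [AddCommGroup Z]
    (f : X →+ Y) (g : Y →+ Z)
    (hfinj : Function.Injective f) (hgsurj : Function.Surjective g)
    (hex : AddMonoidHom.range f = AddMonoidHom.ker g)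
    (j : ℕ) (hj : 1 ≤ j)
    (a : ℕ → X →+ X) (b : ℕ → Y →+ Y) (c : ℕ → Z →+ Z)
    (hcommf : ∀ l : ℕ, f.comp (a (l + j)) = (b (l + j)).comp f)
    (hcommg : ∀ l : ℕ, g.comp (b (l + j)) = (c l).comp g)
    (hb : ∀ m : ℕ, Function.Bijective (b m))
    (hcinj : ∀ l > 0, Function.Injective (c l)) :
    (∀ l > 0, Function.Bijective (a (l + j))) ∧
      Function.Injective (a j) ∧
      (∀ l > 0, Function.Bijective (c l)) ∧
      Function.Surjective (c 0) :=
  bms_ten_five_diagram_chase_general X Y Z f g hfinj hgsurj hex j a b c hcommf hcommg hb hcinj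
end
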